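/- arXiv:1412.2674 — 5 statements merged into one kernel-verified Lean document; each statement's English description precedes it below -/
import Mathlib

section
/- The group G36 defined by the presentation ⟨a, b, c | a⁴ = b⁴ = c² = 1, [b,c] = 1, a⁻¹ba = b⁻¹, cac = a⁻¹⟩ has order 32. -/
/-- The relations of the presentation
`G36 = ⟨a, b, c | a⁴ = b⁴ = c² = 1, [b,c] = 1, a⁻¹ba = b⁻¹, cac = a⁻¹⟩`,
with `a, b, c` the generators `FreeGroup.of 0, 1, 2`. -/
def G36rels : Set (FreeGroup (Fin 3)) :=
  { (FreeGroup.of 0) ^ 4, (FreeGroup.of 1) ^ 4, (FreeGroup.of 2) ^ 2,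
    FreeGroup.of 1 * FreeGroup.of 2 * (FreeGroup.of 1)⁻¹ * (FreeGroup.of 2)⁻¹,
    (FreeGroup.of 0)⁻¹ * FreeGroup.of 1 * FreeGroup.of 0 * FreeGroup.of 1,
    FreeGroup.of 2 * FreeGroup.of 0 * FreeGroup.of 2 * FreeGroup.of 0 }

/-!
Since `a` inverts `b` by conjugation, `c` inverts `a` and `c` commutes with `b`, every element
can be pushed into the form `b ^ i * a ^ j * c ^ k` with `i, j < 4` and `k < 2`, so there are
at most 32 elements. Conversely the relations hold in `C₄ ⋊ D₈`, where `D₈ = ⟨a, c⟩` acts on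
`C₄ = ⟨b⟩` by inversion through the parity of the rotation index, and the images of `a, b, c`
generate this group of order 32.
-/

theorem Submonoid.closure_eq_top_of_isOfFinOrder {G : Type*} [Group G] {s : Set G}
    (hs : Subgroup.closure s = ⊤) (hfin : ∀ x ∈ s, IsOfFinOrder x) :
    Submonoid.closure s = ⊤ := by
  rw [← Subgroup.closure_toSubmonoid_of_isOfFinOrder hfin, hs, Subgroup.top_toSubmonoid]

theorem SemiconjBy.pow_left_of_pow {M : Type*} [Monoid M] {x y : M} {m : ℕ}
    (h : SemiconjBy x y (y ^ m)) (j : ℕ) : SemiconjBy (x ^ j) y (y ^ m ^ j) := by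
  induction j with
  | zero => simp
  | succ j ih =>
    rw [pow_succ, pow_succ, pow_mul]
    exact (ih.pow_right m).mul_left h

namespace G36

def a : PresentedGroup G36rels := .of 0
def b : PresentedGroup G36rels := .of 1
def c : PresentedGroup G36rels := .of 2

theorem a_pow_four : a ^ 4 = 1 := PresentedGroup.one_of_mem (x := .of 0 ^ 4) (by simp [G36rels])
theorem b_pow_four : b ^ 4 = 1 := PresentedGroup.one_of_mem (x := .of 1 ^ 4) (by simp [G36rels])
theorem c_pow_two : c ^ 2 = 1 := PresentedGroup.one_of_mem (x := .of 2 ^ 2) (by simp [G36rels])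

theorem commute_c_b : Commute c b := by
  have h : b * c * b⁻¹ * c⁻¹ = 1 :=
    PresentedGroup.one_of_mem (x := .of 1 * .of 2 * (.of 1)⁻¹ * (.of 2)⁻¹) (by simp [G36rels])
  exact (commutatorElement_eq_one_iff_commute.mp h).symm

theorem semiconjBy_a_b : SemiconjBy a b (b ^ 3) := by
  have h : a⁻¹ * b * a * b = 1 :=
    PresentedGroup.one_of_mem (x := (.of 0)⁻¹ * .of 1 * .of 0 * .of 1) (by simp [G36rels])
  rw [← inv_eq_of_mul_eq_one_right (b := b ^ 3) (by rw [← pow_succ', b_pow_four])]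
  exact eq_inv_mul_iff_mul_eq.mpr (inv_mul_eq_one.mp (by simpa only [mul_assoc] using h)).symm

theorem semiconjBy_c_a : SemiconjBy c a (a ^ 3) := by
  have h : c * a * c * a = 1 :=
    PresentedGroup.one_of_mem (x := .of 2 * .of 0 * .of 2 * .of 0) (by simp [G36rels])
  have hc : c⁻¹ = c := inv_eq_of_mul_eq_one_right (by rw [← sq, c_pow_two])
  rw [← inv_eq_of_mul_eq_one_right (b := a ^ 3) (by rw [← pow_succ', a_pow_four])]
  simp only [mul_assoc] at h
  exact eq_inv_mul_iff_mul_eq.mpr ((eq_inv_of_mul_eq_one_right h).trans hc)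

theorem submonoidClosure_eq_top :
    Submonoid.closure (Set.range (PresentedGroup.of : Fin 3 → PresentedGroup G36rels)) = ⊤ := by
  refine Submonoid.closure_eq_top_of_isOfFinOrder (PresentedGroup.closure_range_of _) ?_
  rintro _ ⟨i, rfl⟩
  fin_cases i
  exacts [isOfFinOrder_iff_pow_eq_one.mpr ⟨4, by norm_num, a_pow_four⟩,
    isOfFinOrder_iff_pow_eq_one.mpr ⟨4, by norm_num, b_pow_four⟩,
    isOfFinOrder_iff_pow_eq_one.mpr ⟨2, by norm_num, c_pow_two⟩]

theorem exists_eq_pow_mul_pow_mul_pow (x : PresentedGroup G36rels) :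
    ∃ i j k : ℕ, x = b ^ i * a ^ j * c ^ k := by
  induction x using Submonoid.induction_of_closure_eq_top_right submonoidClosure_eq_top with
  | one => exact ⟨0, 0, 0, by simp⟩
  | mul_right x y hy ih =>
    obtain ⟨g, rfl⟩ := hy
    obtain ⟨i, j, k, rfl⟩ := ih
    fin_cases g
    · refine ⟨i, j + 3 ^ k, k, ?_⟩
      change _ * a = _
      rw [mul_assoc, (semiconjBy_c_a.pow_left_of_pow k).eq, ← mul_assoc, mul_assoc (b ^ i),
        ← pow_add]
    · refine ⟨i + 3 ^ j, j, k, ?_⟩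
      change _ * b = _
      rw [mul_assoc, (commute_c_b.pow_left k).eq, ← mul_assoc, mul_assoc (b ^ i),
        (semiconjBy_a_b.pow_left_of_pow j).eq, ← mul_assoc, ← pow_add]
    · refine ⟨i, j, k + 1, ?_⟩
      change _ * c = _
      rw [mul_assoc, ← pow_succ]

def normalForm (p : Fin 4 × Fin 4 × Fin 2) : PresentedGroup G36rels :=
  b ^ (p.1 : ℕ) * a ^ (p.2.1 : ℕ) * c ^ (p.2.2 : ℕ)

theorem normalForm_surjective : Function.Surjective normalForm := by
  intro x
  obtain ⟨i, j, k, rfl⟩ := exists_eq_pow_mul_pow_mul_pow x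
  refine ⟨(⟨i % 4, Nat.mod_lt _ (by norm_num)⟩, ⟨j % 4, Nat.mod_lt _ (by norm_num)⟩,
    ⟨k % 2, Nat.mod_lt _ (by norm_num)⟩), ?_⟩
  simp only [normalForm, ← pow_eq_pow_mod _ a_pow_four, ← pow_eq_pow_mod _ b_pow_four,
    ← pow_eq_pow_mod _ c_pow_two]

def dihedralInvAction : DihedralGroup 4 →* MulAut (Multiplicative (ZMod 4)) :=
  MonoidHom.mk' (fun
    | .r i => MulEquiv.inv _ ^ i.val
    | .sr i => MulEquiv.inv _ ^ i.val) (by decide)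

abbrev Model := Multiplicative (ZMod 4) ⋊[dihedralInvAction] DihedralGroup 4

theorem card_model : Nat.card Model = 32 := by
  rw [SemidirectProduct.card, DihedralGroup.nat_card, Nat.card_eq_fintype_card]
  rfl

open SemidirectProduct DihedralGroup Multiplicative

def toModel : PresentedGroup G36rels →* Model :=
  PresentedGroup.toGroup (f := ![inr (r 1), inl (ofAdd 1), inr (sr 0)]) (by
    simp only [G36rels, Set.mem_insert_iff, Set.mem_singleton_iff]
    rintro _ (rfl | rfl | rfl | rfl | rfl | rfl) <;>
      simp only [map_mul, map_inv, map_pow, FreeGroup.lift_apply_of] <;> decide)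

theorem toModel_a : toModel a = inr (r 1) := PresentedGroup.toGroup.of _
theorem toModel_b : toModel b = inl (ofAdd 1) := PresentedGroup.toGroup.of _
theorem toModel_c : toModel c = inr (sr 0) := PresentedGroup.toGroup.of _

theorem toModel_surjective : Function.Surjective toModel := by
  have inl_mem_range (n : Multiplicative (ZMod 4)) : inl n ∈ toModel.range :=
    ⟨b ^ (toAdd n).val, by
      rw [map_pow, toModel_b, ← map_pow, ← ofAdd_nsmul, nsmul_one, ZMod.natCast_zmod_val,
        ofAdd_toAdd]⟩
  have inr_mem_range (g : DihedralGroup 4) : inr g ∈ toModel.range := by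
    cases g with
    | r i => exact ⟨a ^ i.val, by
      rw [map_pow, toModel_a, ← map_pow, r_one_pow, ZMod.natCast_zmod_val]⟩
    | sr i =>
      refine ⟨c * a ^ i.val, ?_⟩
      rw [map_mul, map_pow, toModel_a, toModel_c, ← map_pow, ← map_mul, r_one_pow, sr_mul_r,
        zero_add, ZMod.natCast_zmod_val]
  refine MonoidHom.range_eq_top.mp (eq_top_iff.mpr fun x _ => ?_)
  rw [← inl_left_mul_inr_right x]
  exact mul_mem (inl_mem_range _) (inr_mem_range _)

end G36

/-- The group `G36` defined by the presentation
`⟨a, b, c | a⁴ = b⁴ = c² = 1, [b,c] = 1, a⁻¹ba = b⁻¹, cac = a⁻¹⟩` has order 32. -/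
theorem G36_card : Nat.card (PresentedGroup G36rels) = 32 := by
  have : Finite (PresentedGroup G36rels) := .of_surjective _ G36.normalForm_surjective
  refine le_antisymm ?_ ?_
  · simpa using Nat.card_le_card_of_surjective _ G36.normalForm_surjective
  · calc 32 = Nat.card G36.Model := G36.card_model.symm
      _ ≤ _ := Nat.card_le_card_of_surjective _ G36.toModel_surjective
end

section
/- The group G37 defined by the presentation ⟨a, b, c, d | a⁴ = c² = d² = 1, [b,c] = 1, d = [a,c], b² = a², bab⁻¹ = a⁻¹, with d central⟩ has order 32. -/
def G37rels : Set (FreeGroup (Fin 4)) :=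
  { (FreeGroup.of 0) ^ 4, (FreeGroup.of 2) ^ 2, (FreeGroup.of 3) ^ 2,
    FreeGroup.of 1 * FreeGroup.of 2 * (FreeGroup.of 1)⁻¹ * (FreeGroup.of 2)⁻¹,
    (FreeGroup.of 3)⁻¹ *
      ((FreeGroup.of 0)⁻¹ * (FreeGroup.of 2)⁻¹ * FreeGroup.of 0 * FreeGroup.of 2),
    (FreeGroup.of 1) ^ 2 * ((FreeGroup.of 0) ^ 2)⁻¹,
    FreeGroup.of 1 * FreeGroup.of 0 * (FreeGroup.of 1)⁻¹ * FreeGroup.of 0,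
    FreeGroup.of 3 * FreeGroup.of 0 * (FreeGroup.of 3)⁻¹ * (FreeGroup.of 0)⁻¹,
    FreeGroup.of 3 * FreeGroup.of 1 * (FreeGroup.of 3)⁻¹ * (FreeGroup.of 1)⁻¹,
    FreeGroup.of 3 * FreeGroup.of 2 * (FreeGroup.of 3)⁻¹ * (FreeGroup.of 2)⁻¹ }

namespace G37aux

abbrev P := PresentedGroup G37rels

def α : P := PresentedGroup.of 0
def β : P := PresentedGroup.of 1
def γ : P := PresentedGroup.of 2
def δ : P := PresentedGroup.of 3

lemma relP {r : FreeGroup (Fin 4)} (hr : r ∈ G37rels) :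
    PresentedGroup.mk G37rels r = 1 :=
  (QuotientGroup.eq_one_iff r).mpr (Subgroup.subset_normalClosure hr)

lemma hα4 : α ^ 4 = 1 := by
  have h := relP (show (FreeGroup.of 0) ^ 4 ∈ G37rels by simp [G37rels])
  rwa [map_pow] at h

lemma hγ2 : γ ^ 2 = 1 := by
  have h := relP (show (FreeGroup.of 2) ^ 2 ∈ G37rels by simp [G37rels])
  rwa [map_pow] at h

lemma hδ2 : δ ^ 2 = 1 := by
  have h := relP (show (FreeGroup.of 3) ^ 2 ∈ G37rels by simp [G37rels])
  rwa [map_pow] at h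

lemma hβγ : β * γ = γ * β := by
  have h := relP (show FreeGroup.of 1 * FreeGroup.of 2 * (FreeGroup.of 1)⁻¹ *
      (FreeGroup.of 2)⁻¹ ∈ G37rels by simp [G37rels])
  simp only [map_mul, map_inv] at h
  exact mul_inv_eq_iff_eq_mul.mp (mul_inv_eq_one.mp h)

lemma hβ2 : β ^ 2 = α ^ 2 := by
  have h := relP (show (FreeGroup.of 1) ^ 2 * ((FreeGroup.of 0) ^ 2)⁻¹ ∈ G37rels by
    simp [G37rels])
  simp only [map_mul, map_inv, map_pow] at h
  exact mul_inv_eq_one.mp h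

lemma hβα : β * α = α⁻¹ * β := by
  have h := relP (show FreeGroup.of 1 * FreeGroup.of 0 * (FreeGroup.of 1)⁻¹ *
      FreeGroup.of 0 ∈ G37rels by simp [G37rels])
  simp only [map_mul, map_inv] at h
  exact mul_inv_eq_iff_eq_mul.mp (mul_eq_one_iff_eq_inv.mp h)

lemma hδα : δ * α = α * δ := by
  have h := relP (show FreeGroup.of 3 * FreeGroup.of 0 * (FreeGroup.of 3)⁻¹ *
      (FreeGroup.of 0)⁻¹ ∈ G37rels by simp [G37rels])
  simp only [map_mul, map_inv] at h
  exact mul_inv_eq_iff_eq_mul.mp (mul_inv_eq_one.mp h)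

lemma hδβ : δ * β = β * δ := by
  have h := relP (show FreeGroup.of 3 * FreeGroup.of 1 * (FreeGroup.of 3)⁻¹ *
      (FreeGroup.of 1)⁻¹ ∈ G37rels by simp [G37rels])
  simp only [map_mul, map_inv] at h
  exact mul_inv_eq_iff_eq_mul.mp (mul_inv_eq_one.mp h)

lemma hδγ : δ * γ = γ * δ := by
  have h := relP (show FreeGroup.of 3 * FreeGroup.of 2 * (FreeGroup.of 3)⁻¹ *
      (FreeGroup.of 2)⁻¹ ∈ G37rels by simp [G37rels])
  simp only [map_mul, map_inv] at h
  exact mul_inv_eq_iff_eq_mul.mp (mul_inv_eq_one.mp h)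

lemma hδinv : δ⁻¹ = δ := by
  have : δ * δ = 1 := by rw [← pow_two]; exact hδ2
  exact inv_eq_of_mul_eq_one_right this

lemma hγinv : γ⁻¹ = γ := by
  have : γ * γ = 1 := by rw [← pow_two]; exact hγ2
  exact inv_eq_of_mul_eq_one_right this

lemma hd : δ = α⁻¹ * γ⁻¹ * α * γ := by
  have h := relP (show (FreeGroup.of 3)⁻¹ *
      ((FreeGroup.of 0)⁻¹ * (FreeGroup.of 2)⁻¹ * FreeGroup.of 0 * FreeGroup.of 2) ∈ G37rels by
    simp [G37rels])
  simp only [map_mul, map_inv] at h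
  exact inv_mul_eq_one.mp h

lemma hγα : γ * α = α * γ * δ := by
  have hd' : δ = γ⁻¹ * α⁻¹ * γ * α := by
    rw [← hδinv, hd]; group
  rw [hd']; group

lemma Lαinv (m : ℕ) : (α ^ m)⁻¹ = α ^ (3 * m) := by
  apply inv_eq_of_mul_eq_one_right
  rw [← pow_add]
  have : m + 3 * m = 4 * m := by ring
  rw [this, pow_mul, hα4, one_pow]

lemma LβjA (j : ℕ) : β ^ j * α = α ^ (3 ^ j) * β ^ j := by
  induction j with
  | zero => simp
  | succ j ih =>
    have hsemi : SemiconjBy β α α⁻¹ := hβα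
    have hm : β * α ^ (3 ^ j) = (α ^ (3 ^ j))⁻¹ * β := by
      have := hsemi.pow_right (3 ^ j)
      rw [inv_pow] at this
      exact this
    calc β ^ (j + 1) * α = β * (β ^ j * α) := by rw [pow_succ']; rw [mul_assoc]
      _ = β * (α ^ (3 ^ j) * β ^ j) := by rw [ih]
      _ = (β * α ^ (3 ^ j)) * β ^ j := by rw [mul_assoc]
      _ = ((α ^ (3 ^ j))⁻¹ * β) * β ^ j := by rw [hm]
      _ = α ^ (3 * 3 ^ j) * (β * β ^ j) := by rw [Lαinv]; group
      _ = α ^ (3 ^ (j + 1)) * β ^ (j + 1) := by rw [← pow_succ', ← pow_succ']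

lemma LγkA (k : ℕ) : γ ^ k * α = α * γ ^ k * δ ^ k := by
  induction k with
  | zero => simp
  | succ k ih =>
    have hδγk : δ * γ ^ k = γ ^ k * δ := (Commute.pow_right hδγ k)
    calc γ ^ (k + 1) * α = γ * (γ ^ k * α) := by rw [pow_succ', mul_assoc]
      _ = γ * (α * γ ^ k * δ ^ k) := by rw [ih]
      _ = (γ * α) * γ ^ k * δ ^ k := by simp [mul_assoc]
      _ = (α * γ * δ) * γ ^ k * δ ^ k := by rw [hγα]
      _ = α * γ * (δ * γ ^ k) * δ ^ k := by simp [mul_assoc]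
      _ = α * γ * (γ ^ k * δ) * δ ^ k := by rw [hδγk]
      _ = α * (γ * γ ^ k) * (δ * δ ^ k) := by simp [mul_assoc]
      _ = α * γ ^ (k + 1) * δ ^ (k + 1) := by rw [← pow_succ', ← pow_succ']

/-- normal form word -/
def w (i j k l : ℕ) : P := α ^ i * β ^ j * γ ^ k * δ ^ l

lemma Rδ (i j k l : ℕ) : w i j k l * δ = w i j k (l + 1) := by
  simp [w, pow_succ, mul_assoc]

lemma Rγ (i j k l : ℕ) : w i j k l * γ = w i j (k + 1) l := by
  have h : δ ^ l * γ = γ * δ ^ l := (Commute.pow_left hδγ l)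
  simp only [w, mul_assoc, h, pow_succ]

lemma Rβ (i j k l : ℕ) : w i j k l * β = w i (j + 1) k l := by
  have h1 : δ ^ l * β = β * δ ^ l := (Commute.pow_left hδβ l)
  have h2 : γ ^ k * β = β * γ ^ k := (Commute.pow_left hβγ.symm k)
  have h2' : ∀ t : P, γ ^ k * (β * t) = β * (γ ^ k * t) := fun t => by
    rw [← mul_assoc, h2, mul_assoc]
  simp only [w, mul_assoc, h1, h2, h2', pow_succ]

lemma Rα (i j k l : ℕ) : w i j k l * α = w (i + 3 ^ j) j k (k + l) := by
  have h1 : δ ^ l * α = α * δ ^ l := (Commute.pow_left hδα l)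
  calc w i j k l * α = α ^ i * β ^ j * γ ^ k * (δ ^ l * α) := by simp [w, mul_assoc]
    _ = α ^ i * β ^ j * (γ ^ k * α) * δ ^ l := by rw [h1]; simp [mul_assoc]
    _ = α ^ i * β ^ j * (α * γ ^ k * δ ^ k) * δ ^ l := by rw [LγkA]
    _ = α ^ i * (β ^ j * α) * γ ^ k * (δ ^ k * δ ^ l) := by simp [mul_assoc]
    _ = α ^ i * (α ^ (3 ^ j) * β ^ j) * γ ^ k * (δ ^ k * δ ^ l) := by rw [LβjA]
    _ = (α ^ i * α ^ (3 ^ j)) * β ^ j * γ ^ k * δ ^ (k + l) := by rw [← pow_add]; simp [mul_assoc]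
    _ = w (i + 3 ^ j) j k (k + l) := by rw [← pow_add]; rfl

lemma red (i j k l : ℕ) :
    w i j k l = w ((i + 2 * (j / 2)) % 4) (j % 2) (k % 2) (l % 2) := by
  have hβj : β ^ j = α ^ (2 * (j / 2)) * β ^ (j % 2) := by
    conv_lhs => rw [← Nat.div_add_mod j 2]
    rw [pow_add, pow_mul, hβ2, ← pow_mul]
  calc w i j k l = α ^ i * (α ^ (2 * (j / 2)) * β ^ (j % 2)) * γ ^ k * δ ^ l := by
        rw [w, hβj]
    _ = α ^ (i + 2 * (j / 2)) * β ^ (j % 2) * γ ^ k * δ ^ l := by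
        rw [← mul_assoc, ← pow_add]
    _ = w ((i + 2 * (j / 2)) % 4) (j % 2) (k % 2) (l % 2) := by
        rw [w, ← pow_eq_pow_mod _ hα4, ← pow_eq_pow_mod _ hγ2, ← pow_eq_pow_mod _ hδ2]

abbrev V := ZMod 4 × ZMod 2 × ZMod 2 × ZMod 2

def ψ (v : V) : P := w v.1.val v.2.1.val v.2.2.1.val v.2.2.2.val

lemma exists_w (i j k l : ℕ) : ∃ v : V, ψ v = w i j k l := by
  refine ⟨(↑(i + 2 * (j / 2)), ↑j, ↑k, ↑l), ?_⟩
  simp only [ψ, ZMod.val_natCast]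
  exact (red i j k l).symm

lemma surj : ∀ g : P, ∃ v : V, ψ v = g := by
  intro g
  have hg : g ∈ Subgroup.closure (Set.range (PresentedGroup.of : Fin 4 → P)) := by
    rw [PresentedGroup.closure_range_of]; trivial
  induction hg using Subgroup.closure_induction_right with
  | one => exact ⟨(0, 0, 0, 0), by simp [ψ, w]⟩
  | mul_right x hx y hy ih =>
    obtain ⟨v, rfl⟩ := ih
    obtain ⟨m, rfl⟩ := hy
    have : ψ v = w v.1.val v.2.1.val v.2.2.1.val v.2.2.2.val := rfl
    fin_cases m
    · show ∃ v' : V, ψ v' = ψ v * α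
      rw [this, Rα]; exact exists_w _ _ _ _
    · show ∃ v' : V, ψ v' = ψ v * β
      rw [this, Rβ]; exact exists_w _ _ _ _
    · show ∃ v' : V, ψ v' = ψ v * γ
      rw [this, Rγ]; exact exists_w _ _ _ _
    · show ∃ v' : V, ψ v' = ψ v * δ
      rw [this, Rδ]; exact exists_w _ _ _ _
  | mul_inv_cancel x hx y hy ih =>
    obtain ⟨v, rfl⟩ := ih
    obtain ⟨m, rfl⟩ := hy
    have hv : ψ v = w v.1.val v.2.1.val v.2.2.1.val v.2.2.2.val := rfl
    have hαinv : α⁻¹ = α ^ 3 := by simpa using Lαinv 1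
    have hβinv : β⁻¹ = β * (α * α) := by
      have hβ4 : β * (β * (α * α)) = 1 := by
        have e : β * (β * (α * α)) = β ^ 2 * α ^ 2 := by simp [pow_two, mul_assoc]
        rw [e, hβ2, ← pow_add]; exact hα4
      exact inv_eq_of_mul_eq_one_right hβ4
    fin_cases m
    · show ∃ v' : V, ψ v' = ψ v * α⁻¹
      have e : ψ v * α⁻¹ = ((ψ v * α) * α) * α := by
        rw [hαinv]; simp [pow_succ, mul_assoc]
      rw [e, hv, Rα, Rα, Rα]; exact exists_w _ _ _ _
    · show ∃ v' : V, ψ v' = ψ v * β⁻¹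
      have e : ψ v * β⁻¹ = ((ψ v * β) * α) * α := by
        rw [hβinv]; simp [mul_assoc]
      rw [e, hv, Rβ, Rα, Rα]; exact exists_w _ _ _ _
    · show ∃ v' : V, ψ v' = ψ v * γ⁻¹
      rw [hγinv, hv, Rγ]; exact exists_w _ _ _ _
    · show ∃ v' : V, ψ v' = ψ v * δ⁻¹
      rw [hδinv, hv, Rδ]; exact exists_w _ _ _ _

/-! concrete model -/

abbrev Q8 := QuaternionGroup 2

def s : Q8 → Q8
  | .a i => .a (-i)
  | .xa i => .xa (-i)

def σ : Equiv.Perm Q8 := ⟨s, s, by decide, by decide⟩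

abbrev T := Equiv.Perm Q8 × Equiv.Perm Q8 × Multiplicative (ZMod 2)

def f : Fin 4 → T
  | 0 => (Equiv.mulLeft (.a 1), Equiv.mulLeft (.a 1), 1)
  | 1 => (Equiv.mulLeft (.xa 0), Equiv.mulLeft (.xa 0), 1)
  | 2 => (1, σ, Multiplicative.ofAdd 1)
  | 3 => (1, Equiv.mulLeft (.a 2), 1)

lemma hrel : ∀ r ∈ G37rels, FreeGroup.lift f r = 1 := by
  intro r hr
  simp only [G37rels, Set.mem_insert_iff, Set.mem_singleton_iff] at hr
  rcases hr with rfl | rfl | rfl | rfl | rfl | rfl | rfl | rfl | rfl | rfl <;>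
    simp only [map_mul, map_pow, map_inv, FreeGroup.lift_apply_of] <;> decide

def φ : P →* T := PresentedGroup.toGroup hrel

def F (v : V) : T :=
  (f 0) ^ v.1.val * (f 1) ^ v.2.1.val * (f 2) ^ v.2.2.1.val * (f 3) ^ v.2.2.2.val

lemma hφψ (v : V) : φ (ψ v) = F v := by
  simp only [ψ, w, F, map_mul, map_pow, φ]
  rw [show α = PresentedGroup.of 0 from rfl, show β = PresentedGroup.of 1 from rfl,
    show γ = PresentedGroup.of 2 from rfl, show δ = PresentedGroup.of 3 from rfl]
  simp [PresentedGroup.toGroup.of]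

lemma Finj : ∀ v u : V, F v = F u → v = u := by decide

lemma ψinj : Function.Injective ψ := by
  intro v u h
  exact Finj v u (by rw [← hφψ, ← hφψ, h])

end G37aux

/-- The group `G37` defined by the presentation
`⟨a, b, c, d | a⁴ = c² = d² = 1, [b,c] = 1, d = [a,c], b² = a², bab⁻¹ = a⁻¹, d central⟩`
has order 32. -/
theorem G37_card : Nat.card (PresentedGroup G37rels) = 32 := by
  have hb : Function.Bijective G37aux.ψ := ⟨G37aux.ψinj, fun g => G37aux.surj g⟩
  rw [← Nat.card_eq_of_bijective G37aux.ψ hb]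
  simp [Nat.card_eq_fintype_card]
end

section
/- Let R be a commutative ring and a, c ∈ R with a²c = ac², aⁿ = 0 and cⁿ = 0 for some n ≥ 1. Then for all i, j ≥ 1 with i + j > n, one has aⁱcʲ = 0. -/
theorem aux_shift {R : Type*} [CommRing R] (a c : R)
    (h : a ^ 2 * c = a * c ^ 2) :
    ∀ j i : ℕ, 1 ≤ i → 1 ≤ j → a ^ i * c ^ j = a ^ (i + j - 1) * c := by
  intro j
  induction j with
  | zero => intro i hi hj; omega
  | succ j ih =>
    intro i hi hj
    rcases Nat.eq_zero_or_pos j with hj0 | hj1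
    · subst hj0
      have e : i + (0 + 1) - 1 = i := by omega
      rw [e, pow_one]
    · have key : a ^ i * c ^ (j + 1) = a ^ (i + 1) * c ^ j := by
        obtain ⟨i', rfl⟩ : ∃ i', i = i' + 1 := ⟨i - 1, by omega⟩
        obtain ⟨j', rfl⟩ : ∃ j', j = j' + 1 := ⟨j - 1, by omega⟩
        have : a ^ (i' + 1) * c ^ (j' + 2) = a ^ i' * c ^ j' * (a * c ^ 2) := by ring
        rw [this, ← h]; ring
      rw [key, ih (i + 1) (by omega) hj1]
      have e : i + 1 + j - 1 = i + (j + 1) - 1 := by omega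
      rw [e]

/-- In a commutative ring, if `a²c = ac²`, `aⁿ = 0` and `cⁿ = 0` for some `n ≥ 1`,
then `aⁱcʲ = 0` for all `i, j ≥ 1` with `i + j > n`. -/
theorem pow_mul_pow_eq_zero {R : Type*} [CommRing R] (a c : R) (n : ℕ)
    (hn : 1 ≤ n) (h : a ^ 2 * c = a * c ^ 2) (ha : a ^ n = 0) (hc : c ^ n = 0) :
    ∀ i j : ℕ, 1 ≤ i → 1 ≤ j → n < i + j → a ^ i * c ^ j = 0 := by
  intro i j hi hj hij
  rw [aux_shift a c h j i hi hj]
  have : a ^ (i + j - 1) = a ^ n * a ^ (i + j - 1 - n) := by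
    rw [← pow_add]; congr 1; omega
  rw [this, ha, zero_mul, zero_mul]
end

section
/- Let R be a commutative ring, s ≥ 1, and a, b, c, x ∈ R with x^{2^s} = (b·c)^{2^{s-1}}, b²c = bc², a²c = ac², and a^{2^s} = b^{2^s} = c^{2^s} = 0. Then x^{2^s}·b = 0, x^{2^s}·c = 0, and x^{2^s}·a² = 0. -/
/-! The relation `b²c = bc²` lets every monomial `bⁱ⁺¹cʲ⁺¹` be rewritten as `bcⁱ⁺ʲ⁺¹`, and
`a²c = ac²` trades the `a²` against one more factor of `c`. Writing `2^{s-1} = n + 1`, each of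
`(bc)ⁿ⁺¹b`, `(bc)ⁿ⁺¹c` and `(bc)ⁿ⁺¹a²` thus becomes a multiple of `c^{2(n+1)}`, which vanishes
because `2(n+1) ≥ 2^s`. -/

section CommSemiring

variable {R : Type*} [CommSemiring R] {b c : R}

theorem pow_succ_mul_eq_mul_pow_succ (h : b ^ 2 * c = b * c ^ 2) (k : ℕ) :
    b ^ (k + 1) * c = b * c ^ (k + 1) := by
  induction k with
  | zero => simp
  | succ k ih =>
    calc b ^ (k + 2) * c = b ^ k * (b ^ 2 * c) := by ring
      _ = b ^ (k + 1) * c * c := by rw [h]; ring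
      _ = b * c ^ (k + 2) := by rw [ih]; ring

theorem pow_succ_mul_pow_succ (h : b ^ 2 * c = b * c ^ 2) (i j : ℕ) :
    b ^ (i + 1) * c ^ (j + 1) = b * c ^ (i + j + 1) := by
  calc b ^ (i + 1) * c ^ (j + 1) = b ^ (i + 1) * c * c ^ j := by ring
    _ = b * c ^ (i + j + 1) := by rw [pow_succ_mul_eq_mul_pow_succ h]; ring

theorem mul_pow_succ_mul_left (h : b ^ 2 * c = b * c ^ 2) (n : ℕ) :
    (b * c) ^ (n + 1) * b = b * c ^ (2 * (n + 1)) := by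
  calc (b * c) ^ (n + 1) * b = b ^ (n + 1 + 1) * c ^ (n + 1) := by ring
    _ = b * c ^ (2 * (n + 1)) := by rw [pow_succ_mul_pow_succ h]; ring

theorem mul_pow_succ_mul_right (h : b ^ 2 * c = b * c ^ 2) (n : ℕ) :
    (b * c) ^ (n + 1) * c = b * c ^ (2 * (n + 1)) := by
  calc (b * c) ^ (n + 1) * c = b ^ (n + 1) * c ^ (n + 1 + 1) := by ring
    _ = b * c ^ (2 * (n + 1)) := by rw [pow_succ_mul_pow_succ h]; ring

end CommSemiring

theorem pow_annihilates_general {R : Type*} [CommRing R] (s : ℕ)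
    (a b c x : R) (hx : x ^ 2 ^ s = (b * c) ^ 2 ^ (s - 1))
    (hb2 : b ^ 2 * c = b * c ^ 2) (ha2 : a ^ 2 * c = a * c ^ 2)
    (hc : c ^ 2 ^ s = 0) :
    x ^ 2 ^ s * b = 0 ∧ x ^ 2 ^ s * c = 0 ∧ x ^ 2 ^ s * a ^ 2 = 0 := by
  obtain ⟨n, hn⟩ : ∃ n, 2 ^ (s - 1) = n + 1 := Nat.exists_eq_succ_of_ne_zero (by positivity)
  have hc' : c ^ (2 * (n + 1)) = 0 := by
    refine pow_eq_zero_of_le ?_ hc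
    calc 2 ^ s ≤ 2 ^ (s - 1 + 1) := Nat.pow_le_pow_right two_pos (by omega)
      _ = 2 * (n + 1) := by rw [pow_succ, hn, mul_comm]
  rw [hx, hn]
  refine ⟨?_, ?_, ?_⟩
  · rw [mul_pow_succ_mul_left hb2, hc', mul_zero]
  · rw [mul_pow_succ_mul_right hb2, hc', mul_zero]
  · calc (b * c) ^ (n + 1) * a ^ 2 = (b * c) ^ n * b * (a ^ 2 * c) := by ring
      _ = a * ((b * c) ^ (n + 1) * c) := by rw [ha2]; ring
      _ = 0 := by rw [mul_pow_succ_mul_right hb2, hc', mul_zero, mul_zero]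

/-- In a commutative ring, if `x^{2^s} = (bc)^{2^{s-1}}`, `b²c = bc²`, `a²c = ac²`,
and `a^{2^s} = b^{2^s} = c^{2^s} = 0` (with `s ≥ 1`), then `x^{2^s}` annihilates
`b`, `c` and `a²`. -/
theorem pow_annihilates {R : Type*} [CommRing R] (s : ℕ) (hs : 1 ≤ s)
    (a b c x : R) (hx : x ^ 2 ^ s = (b * c) ^ 2 ^ (s - 1))
    (hb2 : b ^ 2 * c = b * c ^ 2) (ha2 : a ^ 2 * c = a * c ^ 2)
    (ha : a ^ 2 ^ s = 0) (hb : b ^ 2 ^ s = 0) (hc : c ^ 2 ^ s = 0) :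
    x ^ 2 ^ s * b = 0 ∧ x ^ 2 ^ s * c = 0 ∧ x ^ 2 ^ s * a ^ 2 = 0 :=
  pow_annihilates_general s a b c x hx hb2 ha2 hc
end

section
/- Let G = (C₄ × C₄) ⋊ C₂ with generators a, b of the C₄ factors and c the generator of C₂ acting by inversion, and let H = ⟨a, b⟩. Let ν be the character of H with ν(a) = 1, ν(b) = i. Let β, γ be the linear characters of G with β(b) = γ(c) = −1 and β(a) = β(c) = γ(a) = γ(b) = 1. Then the character of the tensor square (Ind_H^G ν)⊗(Ind_H^G ν) equals 1 + β + γ + βγ. -/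
/-- The homomorphism `C₂ → Aut(N)` sending the nontrivial element of `C₂`
to the inversion automorphism of the abelian group `N`. -/
noncomputable def invAction (N : Type*) [CommGroup N] :
    Multiplicative (ZMod 2) →* MulAut N :=
  AddMonoidHom.toMultiplicativeLeft <|
    ZMod.lift 2 ⟨zmultiplesHom (Additive (MulAut N)) (Additive.ofMul (MulEquiv.inv N)), by
      have h : (MulEquiv.inv N) * (MulEquiv.inv N) = 1 := by ext x; simp
      simp only [zmultiplesHom_apply]
      norm_num
      rw [two_zsmul, ← ofMul_mul, h, ofMul_one]⟩

/-- The cyclic group of order `n` (multiplicative). -/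
abbrev Cyc (n : ℕ) := Multiplicative (ZMod n)

/-- The semidirect product `(C₄ × C₄) ⋊ C₂`, where the nontrivial element of `C₂`
acts by inverting both factors: the group `G34`. -/
noncomputable abbrev G34 : Type := (Cyc 4 × Cyc 4) ⋊[invAction (Cyc 4 × Cyc 4)] Cyc 2

open Classical in
/-- The induced character: for a finite group `G`, a subgroup `H` and a function
`χ : H → ℂ`, `Ind_H^G χ (g) = (1/|H|) · Σ_{x ∈ G} χ°(x⁻¹ g x)`, where `χ°` is the
extension of `χ` by zero to `G`. -/
noncomputable def indChar {G : Type*} [Group G] [Fintype G] (H : Subgroup G)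
    (χ : H → ℂ) : G → ℂ := fun g =>
  (Nat.card H : ℂ)⁻¹ * ∑ x : G, if h : x⁻¹ * g * x ∈ H then χ ⟨x⁻¹ * g * x, h⟩ else 0

/-!
`H` is normal of index 2 and `c` acts on it by inversion, so `Ind ν` vanishes off `H` and equals
`ν n + ν n⁻¹` at `n ∈ H`. On `H` the square is therefore `ν n ^ 2 + ν n⁻¹ ^ 2 + 2`; the characters
`ν ^ 2` and `β` of `H` agree on the generators, and `β`, being constant on conjugacy classes, takes
the same value at `n` and `n⁻¹ = c n c⁻¹`. This gives `2 + 2 β = (1 + β) (1 + γ)`, as `γ = 1` on `H`.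
Off `H` we have `γ = -1`, so both sides vanish.
-/

open SemidirectProduct

theorem MonoidHom.ext_mzmod {n : ℕ} [NeZero n] {M : Type*} [Monoid M]
    {f g : Multiplicative (ZMod n) →* M} (h : f (.ofAdd 1) = g (.ofAdd 1)) : f = g := by
  refine MonoidHom.ext fun x => ?_
  have hx : x = .ofAdd 1 ^ (Multiplicative.toAdd x).val := by
    rw [← ofAdd_nsmul, nsmul_one, ZMod.natCast_zmod_val, ofAdd_toAdd]
  rw [hx, map_pow, map_pow, h]

theorem MonoidHom.ext_mzmod_prod {m n : ℕ} [NeZero m] [NeZero n] {M : Type*} [CommMonoid M]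
    {f g : Multiplicative (ZMod m) × Multiplicative (ZMod n) →* M}
    (h₁ : f (.ofAdd 1, 1) = g (.ofAdd 1, 1)) (h₂ : f (1, .ofAdd 1) = g (1, .ofAdd 1)) :
    f = g := by
  rw [← f.coprod_unique, ← g.coprod_unique]
  congr 1 <;> exact MonoidHom.ext_mzmod ‹_›

theorem Cyc.sum_two {M : Type*} [AddCommMonoid M] (f : Cyc 2 → M) :
    ∑ k, f k = f 1 + f (.ofAdd 1) :=
  Fintype.sum_eq_add _ _ (by decide) fun x hx => absurd hx (by revert x; decide)

theorem invAction_ofAdd_one_apply (N : Type*) [CommGroup N] (n : N) :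
    invAction N (.ofAdd 1) n = n⁻¹ := rfl

theorem indChar_eq_zero_of_notMem {G : Type*} [Group G] [Fintype G] (H : Subgroup G) [H.Normal]
    (χ : H → ℂ) {g : G} (hg : g ∉ H) : indChar H χ g = 0 := by
  refine (congrArg _ (Finset.sum_eq_zero fun x _ => dif_neg fun hx => hg ?_)).trans (mul_zero _)
  simpa [mul_assoc] using Subgroup.Normal.conj_mem ‹_› _ hx x

instance SemidirectProduct.normal_range_inl {N K : Type*} [Group N] [Group K]
    {φ : K →* MulAut N} : (inl : N →* N ⋊[φ] K).range.Normal := by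
  rw [range_inl_eq_ker_rightHom]
  infer_instance

section Semidirect

variable {N K : Type*} [CommGroup N] [Group K] {φ : K →* MulAut N}

theorem SemidirectProduct.inv_mul_inl_mul (x : N ⋊[φ] K) (n : N) :
    x⁻¹ * inl n * x = inl (φ x.right⁻¹ n) := by
  ext <;> simp [mul_comm]

theorem indChar_range_inl_apply_inl [Fintype N] [Fintype K] [Fintype (N ⋊[φ] K)]
    (χ : (inl : N →* N ⋊[φ] K).range →* ℂ) (n : N) :
    indChar inl.range (fun h => χ h) (inl n) = ∑ k : K, χ (inl.rangeRestrict (φ k n)) := by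
  have hterm (x : N ⋊[φ] K) (hx : x⁻¹ * inl n * x ∈ (inl : N →* N ⋊[φ] K).range) :
      χ ⟨_, hx⟩ = χ (inl.rangeRestrict (φ x.right⁻¹ n)) :=
    congrArg χ (Subtype.ext (inv_mul_inl_mul x n))
  have hcard : Nat.card (inl : N →* N ⋊[φ] K).range = Fintype.card N := by
    rw [← Nat.card_congr (MonoidHom.ofInjective inl_injective).toEquiv, Nat.card_eq_fintype_card]
  calc indChar inl.range (fun h => χ h) (inl n)
      = (Fintype.card N : ℂ)⁻¹ * ∑ x : N ⋊[φ] K, χ (inl.rangeRestrict (φ x.right⁻¹ n)) := by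
        refine congrArg₂ _ (by rw [hcard]) (Finset.sum_congr rfl fun x _ => ?_)
        rw [dif_pos (by rw [inv_mul_inl_mul]; exact ⟨_, rfl⟩)]
        exact hterm x _
    _ = (Fintype.card N : ℂ)⁻¹ * ∑ _m : N, ∑ k : K, χ (inl.rangeRestrict (φ k⁻¹ n)) := by
        rw [← Fintype.sum_prod_type']
        exact congrArg _ (Fintype.sum_equiv equivProd _ _ fun _ => rfl)
    _ = ∑ k : K, χ (inl.rangeRestrict (φ k n)) := by
        rw [Finset.sum_const, Finset.card_univ, nsmul_eq_mul,
          ← mul_assoc, inv_mul_cancel₀ (by simp), one_mul]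
        exact Fintype.sum_equiv (Equiv.inv K) _ _ fun _ => rfl

end Semidirect

section InvAction

variable {N : Type*} [CommGroup N]

theorem indChar_range_inl_apply_inl_of_invAction [Fintype N] [Fintype (N ⋊[invAction N] Cyc 2)]
    (χ : (inl : N →* N ⋊[invAction N] Cyc 2).range →* ℂ) (n : N) :
    indChar inl.range (fun h => χ h) (inl n) =
      χ (inl.rangeRestrict n) + χ (inl.rangeRestrict n⁻¹) := by
  rw [indChar_range_inl_apply_inl, Cyc.sum_two, map_one]
  rfl

theorem map_inl_inv_of_invAction {M : Type*} [CommMonoid M] (f : N ⋊[invAction N] Cyc 2 →* M)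
    (n : N) : f (inl n⁻¹) = f (inl n) := by
  rw [← invAction_ofAdd_one_apply, inl_aut, map_mul, map_mul, mul_right_comm, ← map_mul,
    ← map_mul inr, mul_inv_cancel, map_one, map_one, one_mul]

end InvAction

theorem G34_tensor_square_character_general [Fintype G34]
    (H : Subgroup G34)
    (hH : H = (SemidirectProduct.inl : (Cyc 4 × Cyc 4) →* G34).range)
    (ν : H →* ℂ) (β γ : G34 →* ℂ)
    (hνa : ν ⟨SemidirectProduct.inl (Multiplicative.ofAdd (1 : ZMod 4), 1),
      hH ▸ MonoidHom.mem_range.mpr ⟨_, rfl⟩⟩ = 1)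
    (hνb : ν ⟨SemidirectProduct.inl (1, Multiplicative.ofAdd (1 : ZMod 4)),
      hH ▸ MonoidHom.mem_range.mpr ⟨_, rfl⟩⟩ = Complex.I)
    (hβa : β (SemidirectProduct.inl (Multiplicative.ofAdd (1 : ZMod 4), 1)) = 1)
    (hβb : β (SemidirectProduct.inl (1, Multiplicative.ofAdd (1 : ZMod 4))) = -1)
    (hγa : γ (SemidirectProduct.inl (Multiplicative.ofAdd (1 : ZMod 4), 1)) = 1)
    (hγb : γ (SemidirectProduct.inl (1, Multiplicative.ofAdd (1 : ZMod 4))) = 1)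
    (hγc : γ (SemidirectProduct.inr (Multiplicative.ofAdd (1 : ZMod 2))) = -1) :
    ∀ g : G34, indChar H (fun x => ν x) g * indChar H (fun x => ν x) g =
      1 + β g + γ g + β g * γ g := by
  subst hH
  have hνa' : ν (inl.rangeRestrict (.ofAdd 1, 1)) = 1 := hνa
  have hνb' : ν (inl.rangeRestrict (1, .ofAdd 1)) = Complex.I := hνb
  have hνsq : (ν.comp inl.rangeRestrict) ^ 2 = β.comp inl :=
    MonoidHom.ext_mzmod_prod (by simp [hνa', hβa]) (by simp [hνb', hβb])
  have hγ : γ.comp inl = 1 := MonoidHom.ext_mzmod_prod (by simpa using hγa) (by simpa using hγb)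
  have hγn (n : Cyc 4 × Cyc 4) : γ (inl n) = 1 := DFunLike.congr_fun hγ n
  rintro ⟨n, k⟩
  rw [mk_eq_inl_mul_inr]
  obtain rfl | rfl : k = 1 ∨ k = .ofAdd 1 := by revert k; decide
  · have hsq (m : Cyc 4 × Cyc 4) : ν (inl.rangeRestrict m) ^ 2 = β (inl m) := by
      simpa using DFunLike.congr_fun hνsq m
    have hinv : ν (inl.rangeRestrict n) * ν (inl.rangeRestrict n⁻¹) = 1 := by
      rw [← map_mul, ← map_mul, mul_inv_cancel, map_one, map_one]
    rw [map_one, mul_one, indChar_range_inl_apply_inl_of_invAction, hγn]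
    linear_combination hsq n + hsq n⁻¹ + 2 * hinv + map_inl_inv_of_invAction β n
  · have hnotMem : inl n * inr (.ofAdd 1) ∉ (inl : Cyc 4 × Cyc 4 →* G34).range := by
      rw [range_inl_eq_ker_rightHom, MonoidHom.mem_ker, map_mul, rightHom_inl, rightHom_inr,
        one_mul]
      decide
    rw [indChar_eq_zero_of_notMem _ _ hnotMem, map_mul γ, hγn, hγc]
    ring

/-- In `G34 = (C₄ × C₄) ⋊ C₂` with generators `a, b` of the `C₄` factors and `c`
the generator of `C₂` acting by inversion, let `H = ⟨a, b⟩`, let `ν` be the linear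
character of `H` with `ν(a) = 1`, `ν(b) = i`, and `β, γ` the linear characters of
`G` with `β(b) = γ(c) = −1`, `β(a) = β(c) = γ(a) = γ(b) = 1`.  Then the character
of the tensor square `(Ind_H^G ν) ⊗ (Ind_H^G ν)` equals `1 + β + γ + βγ`. -/
theorem G34_tensor_square_character [Fintype G34]
    (H : Subgroup G34)
    (hH : H = (SemidirectProduct.inl : (Cyc 4 × Cyc 4) →* G34).range)
    (ν : H →* ℂ) (β γ : G34 →* ℂ)
    (hνa : ν ⟨SemidirectProduct.inl (Multiplicative.ofAdd (1 : ZMod 4), 1),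
      hH ▸ MonoidHom.mem_range.mpr ⟨_, rfl⟩⟩ = 1)
    (hνb : ν ⟨SemidirectProduct.inl (1, Multiplicative.ofAdd (1 : ZMod 4)),
      hH ▸ MonoidHom.mem_range.mpr ⟨_, rfl⟩⟩ = Complex.I)
    (hβa : β (SemidirectProduct.inl (Multiplicative.ofAdd (1 : ZMod 4), 1)) = 1)
    (hβb : β (SemidirectProduct.inl (1, Multiplicative.ofAdd (1 : ZMod 4))) = -1)
    (hβc : β (SemidirectProduct.inr (Multiplicative.ofAdd (1 : ZMod 2))) = 1)
    (hγa : γ (SemidirectProduct.inl (Multiplicative.ofAdd (1 : ZMod 4), 1)) = 1)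
    (hγb : γ (SemidirectProduct.inl (1, Multiplicative.ofAdd (1 : ZMod 4))) = 1)
    (hγc : γ (SemidirectProduct.inr (Multiplicative.ofAdd (1 : ZMod 2))) = -1) :
    ∀ g : G34, indChar H (fun x => ν x) g * indChar H (fun x => ν x) g =
      1 + β g + γ g + β g * γ g :=
  G34_tensor_square_character_general H hH ν β γ hνa hνb hβa hβb hγa hγb hγc
end
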